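/- For the language λcc (simply-typed lambda calculus with natural numbers, recursive functions, call/cc and throw), the small-step reduction relation on complete programs is deterministic: if K[e] reduces to e1 and also to e2 in one step, then e1 = e2. -/
import Mathlib


namespace CC

mutual
inductive Expr : Type where
  | val (v : Val)
  | var (x : String)
  | app (e1 e2 : Expr)
  | natop (e1 e2 : Expr)
  | ite (e1 e2 e3 : Expr)
  | callcc (x : String) (e : Expr)
  | throw (e1 e2 : Expr)
inductive Val : Type where
  | nat (n : Nat)
  | recfun (f x : String) (e : Expr)
  | cont (K : Ectx)
inductive Ectx : Type where
  | hole
  | ite (K : Ectx) (e1 e2 : Expr)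
  | appL (K : Ectx) (v : Val)
  | appR (e : Expr) (K : Ectx)
  | natopR (e : Expr) (K : Ectx)
  | natopL (K : Ectx) (v : Val)
  | throwL (K : Ectx) (e : Expr)
  | throwR (v : Val) (K : Ectx)
end

/-- Plug an expression into the hole of an evaluation context. -/
def plug : Ectx → Expr → Expr
  | .hole, e => e
  | .ite K e1 e2, e => .ite (plug K e) e1 e2
  | .appL K v, e => .app (plug K e) (.val v)
  | .appR e' K, e => .app e' (plug K e)
  | .natopR e' K, e => .natop e' (plug K e)
  | .natopL K v, e => .natop (plug K e) (.val v)
  | .throwL K e', e => .throw (plug K e) e'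
  | .throwR v K, e => .throw (.val v) (plug K e)

mutual
/-- Substitution of a (closed) value for a variable. -/
def substE (x : String) (w : Val) : Expr → Expr
  | .val v => .val (substV x w v)
  | .var y => if y = x then .val w else .var y
  | .app e1 e2 => .app (substE x w e1) (substE x w e2)
  | .natop e1 e2 => .natop (substE x w e1) (substE x w e2)
  | .ite e1 e2 e3 => .ite (substE x w e1) (substE x w e2) (substE x w e3)
  | .callcc y e => if y = x then .callcc y e else .callcc y (substE x w e)
  | .throw e1 e2 => .throw (substE x w e1) (substE x w e2)
def substV (x : String) (w : Val) : Val → Val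
  | .nat n => .nat n
  | .recfun f y e =>
      if f = x ∨ y = x then .recfun f y e else .recfun f y (substE x w e)
  | .cont K => .cont (substK x w K)
def substK (x : String) (w : Val) : Ectx → Ectx
  | .hole => .hole
  | .ite K e1 e2 => .ite (substK x w K) (substE x w e1) (substE x w e2)
  | .appL K v => .appL (substK x w K) (substV x w v)
  | .appR e K => .appR (substE x w e) (substK x w K)
  | .natopR e K => .natopR (substE x w e) (substK x w K)
  | .natopL K v => .natopL (substK x w K) (substV x w v)
  | .throwL K e => .throwL (substK x w K) (substE x w e)
  | .throwR v K => .throwR (substV x w v) (substK x w K)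
end

/-- Local (context-parameterized) head reduction `e →K e'`. -/
inductive Head : Ectx → Expr → Expr → Prop where
  | beta (K : Ectx) (f x : String) (e : Expr) (v : Val) :
      Head K (.app (.val (.recfun f x e)) (.val v))
        (substE x v (substE f (.recfun f x e) e))
  | natop (K : Ectx) (n m : Nat) :
      Head K (.natop (.val (.nat n)) (.val (.nat m))) (.val (.nat (n + m)))
  | ite_true (K : Ectx) (n : Nat) (e1 e2 : Expr) (h : n ≠ 0) :
      Head K (.ite (.val (.nat n)) e1 e2) e1
  | ite_false (K : Ectx) (e1 e2 : Expr) :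
      Head K (.ite (.val (.nat 0)) e1 e2) e2
  | callcc (K : Ectx) (x : String) (e : Expr) :
      Head K (.callcc x e) (substE x (.cont K) e)

/-- Program reduction. -/
inductive Step : Expr → Expr → Prop where
  | head {K : Ectx} {e e' : Expr} : Head K e e' → Step (plug K e) (plug K e')
  | throw (K : Ectx) (v : Val) (K' : Ectx) :
      Step (plug K (.throw (.val v) (.val (.cont K')))) (plug K' (.val v))

end CC


namespace CC

/-- Redex shapes. -/
inductive Red : Expr → Prop where
  | beta (f x : String) (e : Expr) (v : Val) :
      Red (.app (.val (.recfun f x e)) (.val v))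
  | natop (n m : Nat) : Red (.natop (.val (.nat n)) (.val (.nat m)))
  | ite (n : Nat) (e1 e2 : Expr) : Red (.ite (.val (.nat n)) e1 e2)
  | callcc (x : String) (e : Expr) : Red (.callcc x e)
  | throw (v : Val) (K : Ectx) : Red (.throw (.val v) (.val (.cont K)))

theorem head_red {K e e'} (h : Head K e e') : Red e := by
  cases h
  · exact .beta ..
  · exact .natop ..
  · exact .ite ..
  · exact .ite ..
  · exact .callcc ..

theorem plug_ne_val (K : Ectx) (r : Expr) (hr : Red r) (v : Val) :
    plug K r ≠ .val v := by
  cases K <;> cases hr <;> simp [plug]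

theorem unique_decomp : ∀ (K K' : Ectx) (r r' : Expr), Red r → Red r' →
    plug K r = plug K' r' → K = K' ∧ r = r'
  | .hole, K', r, r', hr, hr', h => by
    cases K' <;> cases hr <;> cases hr' <;> simp_all [plug] <;>
      first
      | (exact absurd h.1.symm (plug_ne_val _ _ (by constructor) _))
      | (exact absurd h.1.1.symm (plug_ne_val _ _ (by constructor) _))
      | (exact absurd h.2.symm (plug_ne_val _ _ (by constructor) _))
  | .ite K e1 e2, K', r, r', hr, hr', h => by
    cases K' <;> simp_all [plug]
    case hole => cases hr' <;> simp_all <;>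
      exact absurd h.1 (plug_ne_val _ _ hr _)
    case ite K2 a b =>
      obtain ⟨h1, h2, h3⟩ := h
      obtain ⟨hk, he⟩ := unique_decomp K K2 r r' hr hr' h1
      simp_all
  | .appL K w, K', r, r', hr, hr', h => by
    cases K' <;> simp_all [plug]
    case hole => cases hr' <;> simp_all <;>
      exact absurd h.1 (plug_ne_val _ _ hr _)
    case appL K2 w2 =>
      obtain ⟨h1, h2⟩ := h
      obtain ⟨hk, he⟩ := unique_decomp K K2 r r' hr hr' h1
      simp_all
    case appR e K2 =>
      obtain ⟨h1, h2⟩ := h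
      exact absurd h2.symm (plug_ne_val _ _ hr' _)
  | .appR e K, K', r, r', hr, hr', h => by
    cases K' <;> simp_all [plug]
    case hole => cases hr' <;> simp_all <;>
      exact absurd h.2 (plug_ne_val _ _ hr _)
    case appL K2 w2 =>
      obtain ⟨h1, h2⟩ := h
      exact absurd h2 (plug_ne_val _ _ hr _)
    case appR e2 K2 =>
      obtain ⟨h1, h2⟩ := h
      obtain ⟨hk, he⟩ := unique_decomp K K2 r r' hr hr' h2
      simp_all
  | .natopR e K, K', r, r', hr, hr', h => by
    cases K' <;> simp_all [plug]
    case hole => cases hr' <;> simp_all <;>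
      exact absurd h.2 (plug_ne_val _ _ hr _)
    case natopR e2 K2 =>
      obtain ⟨h1, h2⟩ := h
      obtain ⟨hk, he⟩ := unique_decomp K K2 r r' hr hr' h2
      simp_all
    case natopL K2 w2 =>
      obtain ⟨h1, h2⟩ := h
      exact absurd h2 (plug_ne_val _ _ hr _)
  | .natopL K w, K', r, r', hr, hr', h => by
    cases K' <;> simp_all [plug]
    case hole => cases hr' <;> simp_all <;>
      exact absurd h.1 (plug_ne_val _ _ hr _)
    case natopR e2 K2 =>
      obtain ⟨h1, h2⟩ := h
      exact absurd h2.symm (plug_ne_val _ _ hr' _)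
    case natopL K2 w2 =>
      obtain ⟨h1, h2⟩ := h
      obtain ⟨hk, he⟩ := unique_decomp K K2 r r' hr hr' h1
      simp_all
  | .throwL K e, K', r, r', hr, hr', h => by
    cases K' <;> simp_all [plug]
    case hole => cases hr' <;> simp_all <;>
      exact absurd h.1 (plug_ne_val _ _ hr _)
    case throwL K2 e2 =>
      obtain ⟨h1, h2⟩ := h
      obtain ⟨hk, he⟩ := unique_decomp K K2 r r' hr hr' h1
      simp_all
    case throwR w2 K2 =>
      obtain ⟨h1, h2⟩ := h
      exact absurd h1 (plug_ne_val _ _ hr _)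
  | .throwR w K, K', r, r', hr, hr', h => by
    cases K' <;> simp_all [plug]
    case hole => cases hr' <;> simp_all <;>
      exact absurd h.2 (plug_ne_val _ _ hr _)
    case throwL K2 e2 =>
      obtain ⟨h1, h2⟩ := h
      exact absurd h1.symm (plug_ne_val _ _ hr' _)
    case throwR w2 K2 =>
      obtain ⟨h1, h2⟩ := h
      obtain ⟨hk, he⟩ := unique_decomp K K2 r r' hr hr' h2
      simp_all

theorem step_inv {e e' : Expr} (h : Step e e') :
    (∃ K r r', e = plug K r ∧ e' = plug K r' ∧ Head K r r') ∨
    (∃ K v K', e = plug K (.throw (.val v) (.val (.cont K'))) ∧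
      e' = plug K' (.val v)) := by
  cases h with
  | head hh => exact Or.inl ⟨_, _, _, rfl, rfl, hh⟩
  | throw K v K' => exact Or.inr ⟨K, v, K', rfl, rfl⟩

theorem head_det {K e a b} (h1 : Head K e a) (h2 : Head K e b) : a = b := by
  cases h1 <;> cases h2 <;> simp_all

end CC

/-- the program reduction relation of λcc is deterministic. -/
theorem cc_step_deterministic (e e1 e2 : CC.Expr)
    (h1 : CC.Step e e1) (h2 : CC.Step e e2) : e1 = e2 := by
  rcases CC.step_inv h1 with ⟨K, r, r1, he, he1, hh1⟩ | ⟨K, v, K', he, he1⟩ <;>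
    rcases CC.step_inv h2 with ⟨K2, r2, r3, he', he2, hh2⟩ | ⟨K2, v2, K2', he', he2⟩ <;>
      subst he1 <;> subst he2 <;> subst he
  · obtain ⟨hK, hr⟩ := CC.unique_decomp K K2 r r2 (CC.head_red hh1)
      (CC.head_red hh2) he'
    subst hK; subst hr
    exact congrArg _ (CC.head_det hh1 hh2)
  · obtain ⟨hK, hr⟩ := CC.unique_decomp K K2 r _ (CC.head_red hh1)
      (CC.Red.throw v2 K2') he'
    subst hr; cases hh1
  · obtain ⟨hK, hr⟩ := CC.unique_decomp K2 K r2 _ (CC.head_red hh2)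
      (CC.Red.throw v K') he'.symm
    subst hr; cases hh2
  · obtain ⟨hK, hr⟩ := CC.unique_decomp K K2 _ _ (CC.Red.throw v K')
      (CC.Red.throw v2 K2') he'
    injection hr with h1 h2
    injection h1; injection h2 with h3; injection h3
    subst_vars; rfl
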